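/- arXiv:1512.00333 — 3 statements merged into one kernel-verified Lean document; each statement's English description precedes it below -/
import Mathlib

section
/- In the q-T-fractal △_q, the boundaries B_0, B_1, …, B_q are pairwise edge-disjoint, and each boundary B_i forms a σ-τ path in △_q. -/
/-- Auxiliary adjacency: `b = a + 2^(q-i)` for some `i ≤ q` with `2^(q-i) ∣ a`.
These are exactly the (directed versions of the) edges of the `q`-T-fractal,
where the boundary `B_i` consists of the edges at scale `2^(q-i)`. -/
def fracAdjAux (q a b : ℕ) : Prop :=
  ∃ i ≤ q, 2 ^ (q - i) ∣ a ∧ b = a + 2 ^ (q - i)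

/-- The `q`-T-fractal, realized on the vertex set `{0, 1, …, 2^q}` (the vertices of the
outermost boundary path): the left copy of `△_{q-1}` lives on `{0,…,2^{q-1}}`, the right
copy on `{2^{q-1},…,2^q}`, and `{0, 2^q}` is the extra edge; `σ = 0` and `τ = 2^q`. -/
def TFractal (q : ℕ) : SimpleGraph (Fin (2 ^ q + 1)) where
  Adj a b := fracAdjAux q a.val b.val ∨ fracAdjAux q b.val a.val
  symm := ⟨fun _ _ h => h.symm⟩
  loopless := ⟨by
    intro a h
    rcases h with ⟨i, _, _, h⟩ | ⟨i, _, _, h⟩ <;>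
      · have := Nat.two_pow_pos (q - i)
        omega⟩

/-- The special vertex `σ` of the `q`-T-fractal. -/
def sigV (q : ℕ) : Fin (2 ^ q + 1) := ⟨0, Nat.succ_pos _⟩

/-- The special vertex `τ` of the `q`-T-fractal. -/
def tauV (q : ℕ) : Fin (2 ^ q + 1) := ⟨2 ^ q, Nat.lt_succ_self _⟩

/-- The boundary `B_i` of the `q`-T-fractal: the edges created in round `i`,
i.e. the edges `{a, a + 2^(q-i)}` with `2^(q-i) ∣ a`. -/
def boundaryB (q i : ℕ) : Set (Sym2 (Fin (2 ^ q + 1))) :=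
  { e | ∃ a b : Fin (2 ^ q + 1),
      e = s(a, b) ∧ 2 ^ (q - i) ∣ a.val ∧ b.val = a.val + 2 ^ (q - i) }

/-- `C` is a `σ`-`τ` edge cut in the `q`-T-fractal. -/
def IsSTCut (q : ℕ) (C : Set (Sym2 (Fin (2 ^ q + 1)))) : Prop :=
  ¬ ((TFractal q).deleteEdges C).Reachable (sigV q) (tauV q)

/-- `C` is a minimum `σ`-`τ` edge cut in the `q`-T-fractal. -/
def MinSTCut (q : ℕ) (C : Set (Sym2 (Fin (2 ^ q + 1)))) : Prop :=
  C ⊆ (TFractal q).edgeSet ∧ IsSTCut q C ∧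
    ∀ C' ⊆ (TFractal q).edgeSet, IsSTCut q C' → C.ncard ≤ C'.ncard

/-! Identifying the vertices with `0, …, 2^q`, the edges of `B_i` are exactly the pairs
`{k·2^(q-i), (k+1)·2^(q-i)}` with `k < 2^i`: so `B_i` is the staircase path
`σ = 0, 2^(q-i), 2·2^(q-i), …, 2^q = τ`, and boundaries of different rounds are told apart
by the span `2^(q-i)` of their edges. -/

namespace SimpleGraph

variable {V : Type*} {G : SimpleGraph V}

theorem exists_walk_of_adj_succ (f : ℕ → V) (n : ℕ)
    (hadj : ∀ k < n, G.Adj (f k) (f (k + 1))) :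
    ∃ p : G.Walk (f 0) (f n), p.support = (List.range (n + 1)).map f ∧
      {e | e ∈ p.edges} = {e | ∃ k < n, e = s(f k, f (k + 1))} := by
  induction n with
  | zero => exact ⟨.nil, rfl, by simp⟩
  | succ n ih =>
    obtain ⟨p, hsupp, hedges⟩ := ih fun k hk => hadj k (by omega)
    refine ⟨p.concat (hadj n n.lt_succ_self), ?_, ?_⟩
    · rw [Walk.support_concat, hsupp, List.range_succ (n := n + 1), List.map_append]
      rfl
    · ext e
      have hp := Set.ext_iff.mp hedges e
      simp only [Set.mem_ofPred_eq, Walk.edges_concat, List.concat_eq_append, List.mem_append,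
        List.mem_singleton] at hp ⊢
      rw [hp]
      constructor
      · rintro (⟨k, hk, rfl⟩ | rfl)
        exacts [⟨k, by omega, rfl⟩, ⟨n, by omega, rfl⟩]
      · rintro ⟨k, hk, rfl⟩
        obtain hk | rfl := Nat.lt_succ_iff_lt_or_eq.mp hk
        exacts [Or.inl ⟨k, hk, rfl⟩, Or.inr rfl]

theorem exists_path_of_adj_succ (f : ℕ → V) (n : ℕ) (hf : Set.InjOn f (Set.Iic n))
    (hadj : ∀ k < n, G.Adj (f k) (f (k + 1))) :
    ∃ p : G.Walk (f 0) (f n), p.IsPath ∧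
      {e | e ∈ p.edges} = {e | ∃ k < n, e = s(f k, f (k + 1))} := by
  obtain ⟨p, hsupp, hedges⟩ := exists_walk_of_adj_succ f n hadj
  refine ⟨p, ?_, hedges⟩
  rw [Walk.isPath_def, hsupp]
  refine List.Nodup.map_on (fun x hx y hy hxy => hf ?_ ?_ hxy) List.nodup_range
  all_goals simp only [List.mem_range] at hx hy; simp only [Set.mem_Iic]; omega

end SimpleGraph

theorem boundaryB_disjoint {q i j : ℕ} (hne : 2 ^ (q - i) ≠ 2 ^ (q - j)) :
    Disjoint (boundaryB q i) (boundaryB q j) := by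
  rw [Set.disjoint_left]
  rintro e ⟨a, b, rfl, -, hb⟩ ⟨a', b', he, -, hb'⟩
  have := Nat.two_pow_pos (q - i)
  have := Nat.two_pow_pos (q - j)
  rcases Sym2.eq_iff.mp he with ⟨rfl, rfl⟩ | ⟨rfl, rfl⟩ <;> omega

-- Taken mod `2^q + 1`, so this is the position `k * 2^(q-i)` only for `k ≤ 2^i`.
def boundaryVertex (q i k : ℕ) : Fin (2 ^ q + 1) := Fin.ofNat _ (k * 2 ^ (q - i))

theorem val_boundaryVertex {q i k : ℕ} (hi : i ≤ q) (hk : k ≤ 2 ^ i) :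
    (boundaryVertex q i k).val = k * 2 ^ (q - i) := by
  refine (Fin.val_ofNat _ _).trans (Nat.mod_eq_of_lt (Nat.lt_succ_of_le ?_))
  calc k * 2 ^ (q - i) ≤ 2 ^ i * 2 ^ (q - i) := Nat.mul_le_mul_right _ hk
    _ = 2 ^ q := pow_mul_pow_sub 2 hi

theorem boundaryB_eq {q i : ℕ} (hi : i ≤ q) :
    boundaryB q i = {e | ∃ k < 2 ^ i, e = s(boundaryVertex q i k, boundaryVertex q i (k + 1))} := by
  ext e
  constructor
  · rintro ⟨a, b, rfl, ⟨k, ha⟩, hb⟩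
    have hk : k < 2 ^ i := by
      refine Nat.lt_of_mul_lt_mul_right (a := 2 ^ (q - i)) ?_
      rw [pow_mul_pow_sub 2 hi]
      rw [mul_comm] at ha
      linarith [b.isLt, Nat.two_pow_pos (q - i)]
    refine ⟨k, hk, ?_⟩
    congr 1 <;> ext
    · rw [val_boundaryVertex hi hk.le, ha, mul_comm]
    · rw [val_boundaryVertex (k := k + 1) hi hk, hb, ha, add_one_mul, mul_comm]
  · rintro ⟨k, hk, rfl⟩
    refine ⟨_, _, rfl, ?_, ?_⟩ <;> rw [val_boundaryVertex hi hk.le]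
    · exact Dvd.intro_left k rfl
    · rw [val_boundaryVertex (k := k + 1) hi hk, add_one_mul]

theorem boundaryB_subset_edgeSet {q i : ℕ} (hi : i ≤ q) :
    boundaryB q i ⊆ (TFractal q).edgeSet := by
  rintro _ ⟨a, b, rfl, hdvd, hb⟩
  exact Or.inl ⟨i, hi, hdvd, hb⟩

theorem boundaryVertex_injOn {q i : ℕ} (hi : i ≤ q) :
    Set.InjOn (boundaryVertex q i) (Set.Iic (2 ^ i)) := fun k hk l hl h => by
  have := congrArg Fin.val h
  rw [val_boundaryVertex hi hk, val_boundaryVertex hi hl] at this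
  exact Nat.eq_of_mul_eq_mul_right (Nat.two_pow_pos _) this

theorem boundaryVertex_zero (q i : ℕ) : boundaryVertex q i 0 = sigV q := by
  ext
  simp [boundaryVertex, sigV]

theorem boundaryVertex_two_pow {q i : ℕ} (hi : i ≤ q) : boundaryVertex q i (2 ^ i) = tauV q := by
  ext
  rw [val_boundaryVertex hi le_rfl, pow_mul_pow_sub 2 hi]
  rfl

/-- the boundaries `B_0, …, B_q` of the `q`-T-fractal are pairwise
edge-disjoint, and each boundary `B_i` forms a `σ`-`τ` path in `△_q`. -/
theorem tfractal_boundaries_disjoint_and_paths (q : ℕ) :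
    (∀ i ≤ q, ∀ j ≤ q, i ≠ j → Disjoint (boundaryB q i) (boundaryB q j)) ∧
      (∀ i ≤ q, ∃ p : (TFractal q).Walk (sigV q) (tauV q),
        p.IsPath ∧ {e | e ∈ p.edges} = boundaryB q i) := by
  refine ⟨fun i hi j hj hij => boundaryB_disjoint fun h => hij ?_, fun i hi => ?_⟩
  · have := Nat.pow_right_injective le_rfl h
    omega
  have hadj : ∀ k < 2 ^ i, (TFractal q).Adj (boundaryVertex q i k) (boundaryVertex q i (k + 1)) :=
    fun k hk => boundaryB_subset_edgeSet hi <| by rw [boundaryB_eq hi]; exact ⟨k, hk, rfl⟩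
  obtain ⟨p, hpath, hedges⟩ :=
    SimpleGraph.exists_path_of_adj_succ _ _ (boundaryVertex_injOn hi) hadj
  refine ⟨p.copy (boundaryVertex_zero q i) (boundaryVertex_two_pow hi), ?_, ?_⟩
  · rwa [SimpleGraph.Walk.isPath_copy]
  · rw [SimpleGraph.Walk.edges_copy, hedges, boundaryB_eq hi]
end

section
/- The q-T-fractal △_q has exactly 2^q pairwise distinct minimum σ-τ edge cuts. -/
/-!
Number the vertices of `△_q` by `0, …, 2^q`, so that its edges are the dyadic intervals
`{u, u + 2^k}` with `2^k ∣ u` and `k ≤ q`. The edges of a fixed length `2^k` form a `σ`-`τ`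
path, so every cut contains edges of all `q + 1` lengths. Conversely, for a threshold
`1 ≤ t ≤ 2^q` exactly one edge of each length crosses from `< t` to `≥ t`, so these `q + 1`
edges form a minimum cut. Every minimum cut `C` is of this form: if `C` separates the ends of a
dyadic interval, then it contains the edge joining them and separates the ends of one of the two
halves. Descending from `{σ, τ} = {0, 2^q}` gives a nested chain of edges of `C`, one of each
length, all crossing a common threshold `t`, and then `C` contains the threshold cut of `t`.
Distinct thresholds give distinct cuts, so there are `2^q` minimum cuts.
-/

open Set SimpleGraph Fin.NatCast

def edgeSpan {n : ℕ} (e : Sym2 (Fin n)) : ℕ :=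
  Sym2.lift ⟨fun a b : Fin n => Nat.dist a.val b.val, fun a b => Nat.dist_comm a.val b.val⟩ e

lemma edgeSpan_mk_of_val_eq_add {n d : ℕ} {a b : Fin n} (h : b.val = a.val + d) :
    edgeSpan s(a, b) = d := by
  change Nat.dist a.val b.val = d
  rw [h, Nat.dist_eq_sub_of_le (Nat.le_add_right _ _), Nat.add_sub_cancel_left]

lemma fracAdjAux_iff {q a b : ℕ} :
    fracAdjAux q a b ↔ ∃ k ≤ q, 2 ^ k ∣ a ∧ b = a + 2 ^ k :=
  ⟨fun ⟨i, _, h⟩ => ⟨q - i, Nat.sub_le q i, h⟩,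
    fun ⟨k, hk, h⟩ => ⟨q - k, Nat.sub_le q k, by rwa [Nat.sub_sub_self hk]⟩⟩

lemma TFractal.exists_of_adj_of_lt {q : ℕ} {a b : Fin (2 ^ q + 1)} (h : (TFractal q).Adj a b)
    (hab : a.val < b.val) : ∃ k ≤ q, 2 ^ k ∣ a.val ∧ b.val = a.val + 2 ^ k := by
  rcases h with h | h
  · exact fracAdjAux_iff.1 h
  · obtain ⟨k, -, -, h⟩ := fracAdjAux_iff.1 h
    have := Nat.two_pow_pos k
    omega

lemma TFractal.edgeSpan_mem_of_mem_edgeSet {q : ℕ} {e : Sym2 (Fin (2 ^ q + 1))}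
    (he : e ∈ (TFractal q).edgeSet) : edgeSpan e ∈ (2 ^ ·) '' Iic q := by
  induction e using Sym2.ind with | _ a b => ?_
  wlog hab : a.val < b.val generalizing a b
  · rw [Sym2.eq_swap]
    exact this b a ((TFractal q).adj_symm he)
      ((lt_or_gt_of_ne (Fin.val_injective.ne ((TFractal q).ne_of_adj he))).resolve_left hab)
  obtain ⟨k, hk, -, hb⟩ := TFractal.exists_of_adj_of_lt he hab
  exact ⟨k, hk, (edgeSpan_mk_of_val_eq_add hb).symm⟩

lemma ncard_image_two_pow_Iic (q : ℕ) : ((2 ^ ·) '' Iic q).ncard = q + 1 := by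
  rw [ncard_image_of_injective _ (Nat.pow_right_injective le_rfl), ncard_Iic_nat]

lemma val_natCast_of_le {q u : ℕ} (h : u ≤ 2 ^ q) : ((u : Fin (2 ^ q + 1)) : ℕ) = u :=
  Fin.val_cast_of_lt (Nat.lt_succ_of_le h)

lemma sigV_eq_natCast (q : ℕ) : sigV q = ((0 : ℕ) : Fin (2 ^ q + 1)) :=
  Fin.ext (val_natCast_of_le (Nat.zero_le _)).symm

lemma tauV_eq_natCast (q : ℕ) : tauV q = ((2 ^ q : ℕ) : Fin (2 ^ q + 1)) :=
  Fin.ext (val_natCast_of_le le_rfl).symm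

/-- The casts wrap around modulo `2^q + 1`: this is the intended edge only if `u + 2^k ≤ 2^q`. -/
def dyadicEdge (q k u : ℕ) : Sym2 (Fin (2 ^ q + 1)) :=
  s((u : Fin (2 ^ q + 1)), ((u + 2 ^ k : ℕ) : Fin (2 ^ q + 1)))

section dyadicEdge

variable {q k u : ℕ}

lemma TFractal.adj_natCast (hdvd : 2 ^ k ∣ u) (hle : u + 2 ^ k ≤ 2 ^ q) :
    (TFractal q).Adj (u : Fin (2 ^ q + 1)) ((u + 2 ^ k : ℕ) : Fin (2 ^ q + 1)) := by
  have hk : k ≤ q := (Nat.pow_le_pow_iff_right (le_refl 2)).1 (by omega)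
  refine Or.inl (fracAdjAux_iff.2 ⟨k, hk, ?_⟩)
  rw [val_natCast_of_le (le_of_add_le_left hle), val_natCast_of_le hle]
  exact ⟨hdvd, rfl⟩

lemma edgeSpan_dyadicEdge (hle : u + 2 ^ k ≤ 2 ^ q) : edgeSpan (dyadicEdge q k u) = 2 ^ k :=
  edgeSpan_mk_of_val_eq_add <| by
    rw [val_natCast_of_le hle, val_natCast_of_le (le_of_add_le_left hle)]

lemma reachable_of_dyadicEdge_notMem {C : Set (Sym2 (Fin (2 ^ q + 1)))} (hdvd : 2 ^ k ∣ u)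
    (hle : u + 2 ^ k ≤ 2 ^ q) (h : dyadicEdge q k u ∉ C) :
    ((TFractal q).deleteEdges C).Reachable (u : Fin (2 ^ q + 1)) ((u + 2 ^ k : ℕ) : Fin _) :=
  Adj.reachable (deleteEdges_adj.2 ⟨TFractal.adj_natCast hdvd hle, h⟩)

end dyadicEdge

def crossingEdges (q t : ℕ) : Set (Sym2 (Fin (2 ^ q + 1))) :=
  {e ∈ (TFractal q).edgeSet |
    ∃ a b : Fin (2 ^ q + 1), e = s(a, b) ∧ a.val < t ∧ t ≤ b.val}

section crossingEdges

variable {q t : ℕ}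

lemma dyadicEdge_mem_crossingEdges {k u : ℕ} (hdvd : 2 ^ k ∣ u) (hle : u + 2 ^ k ≤ 2 ^ q)
    (hut : u < t) (htu : t ≤ u + 2 ^ k) : dyadicEdge q k u ∈ crossingEdges q t :=
  ⟨TFractal.adj_natCast hdvd hle, _, _, rfl, by rwa [val_natCast_of_le (le_of_add_le_left hle)],
    by rwa [val_natCast_of_le hle]⟩

lemma lt_and_le_of_mk_mem_crossingEdges {a b : Fin (2 ^ q + 1)}
    (h : s(a, b) ∈ crossingEdges q t) (hab : a.val < b.val) : a.val < t ∧ t ≤ b.val := by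
  obtain ⟨-, a', b', he, ha', hb'⟩ := h
  rcases Sym2.eq_iff.1 he with ⟨rfl, rfl⟩ | ⟨rfl, rfl⟩ <;> omega

lemma edgeSpan_injOn_crossingEdges : InjOn edgeSpan (crossingEdges q t) := by
  rintro _ ⟨he, a, b, rfl, hat, htb⟩ _ ⟨he', a', b', rfl, hat', htb'⟩ hspan
  obtain ⟨k, -, hk, hb⟩ :=
    TFractal.exists_of_adj_of_lt ((TFractal q).mem_edgeSet.1 he) (by omega)
  obtain ⟨k', -, hk', hb'⟩ :=
    TFractal.exists_of_adj_of_lt ((TFractal q).mem_edgeSet.1 he') (by omega)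
  rw [edgeSpan_mk_of_val_eq_add hb, edgeSpan_mk_of_val_eq_add hb'] at hspan
  obtain rfl := Nat.pow_right_injective le_rfl hspan
  -- two aligned blocks of length `2^k` both containing `t - 1` coincide
  have key : ∀ x y : ℕ, 2 ^ k ∣ x → 2 ^ k ∣ y → x ≤ y → y < x + 2 ^ k → x = y :=
    fun x y hx hy hxy hyx => by
      have := Nat.eq_zero_of_dvd_of_lt (Nat.dvd_sub hy hx) (by omega)
      omega
  have ha : a = a' := Fin.ext <| (le_total a.val a'.val).elim
    (fun h => key _ _ hk hk' h (by omega)) (fun h => (key _ _ hk' hk h (by omega)).symm)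
  subst ha
  rw [Fin.ext (hb.trans hb'.symm)]

lemma isSTCut_of_crossingEdges_subset {C : Set (Sym2 (Fin (2 ^ q + 1)))} (ht : 1 ≤ t)
    (ht' : t ≤ 2 ^ q) (hC : crossingEdges q t ⊆ C) : IsSTCut q C := by
  intro h
  suffices ∀ v, Relation.ReflTransGen ((TFractal q).deleteEdges C).Adj (sigV q) v → v.val < t by
    exact absurd (this _ ((reachable_iff_reflTransGen _ _).1 h)) (not_lt.2 ht')
  intro v hv
  induction hv with
  | refl => exact ht
  | tail _ hadj ih =>
    by_contra hv
    exact (deleteEdges_adj.1 hadj).2 (hC ⟨(deleteEdges_adj.1 hadj).1, _, _, rfl, ih,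
      not_lt.1 hv⟩)

lemma crossingEdges_ncard_le : (crossingEdges q t).ncard ≤ q + 1 := by
  calc (crossingEdges q t).ncard = (edgeSpan '' crossingEdges q t).ncard :=
        (edgeSpan_injOn_crossingEdges.ncard_image).symm
    _ ≤ ((2 ^ ·) '' Iic q).ncard := ncard_le_ncard
        (image_subset_iff.2 fun _ he => TFractal.edgeSpan_mem_of_mem_edgeSet he.1) (toFinite _)
    _ = q + 1 := ncard_image_two_pow_Iic q

end crossingEdges

section cuts

variable {q : ℕ} {C : Set (Sym2 (Fin (2 ^ q + 1)))}

/-- The edges of length `2^k` form a path `0, 2^k, 2 * 2^k, …, 2^q` from `σ` to `τ`. -/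
lemma IsSTCut.two_pow_mem_edgeSpan_image (hC : IsSTCut q C) {k : ℕ} (hk : k ≤ q) :
    2 ^ k ∈ edgeSpan '' C := by
  by_contra hnot
  have hreach : ∀ j, j * 2 ^ k ≤ 2 ^ q →
      ((TFractal q).deleteEdges C).Reachable ((0 : ℕ) : Fin (2 ^ q + 1))
        ((j * 2 ^ k : ℕ) : Fin _) := by
    intro j
    induction j with
    | zero => simp
    | succ j ih =>
      intro hj
      rw [Nat.succ_mul] at hj ⊢
      have hle : j * 2 ^ k + 2 ^ k ≤ 2 ^ q := hj
      exact (ih (le_of_add_le_left hle)).trans (reachable_of_dyadicEdge_notMem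
        (dvd_mul_left _ _) hle fun he => hnot ⟨_, he, edgeSpan_dyadicEdge hle⟩)
  apply hC
  have hpow : 2 ^ (q - k) * 2 ^ k = 2 ^ q := by rw [← pow_add, Nat.sub_add_cancel hk]
  rw [sigV_eq_natCast, tauV_eq_natCast]
  simpa only [hpow] using hreach _ hpow.le

lemma IsSTCut.succ_le_ncard (hC : IsSTCut q C) : q + 1 ≤ C.ncard :=
  calc q + 1 = ((2 ^ ·) '' Iic q).ncard := (ncard_image_two_pow_Iic q).symm
    _ ≤ (edgeSpan '' C).ncard :=
        ncard_le_ncard (image_subset_iff.2 fun _ hk => hC.two_pow_mem_edgeSpan_image hk)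
          (toFinite _)
    _ ≤ C.ncard := ncard_image_le (toFinite _)

lemma minSTCut_crossingEdges {t : ℕ} (ht : 1 ≤ t) (ht' : t ≤ 2 ^ q) :
    MinSTCut q (crossingEdges q t) :=
  ⟨sep_subset _ _, isSTCut_of_crossingEdges_subset ht ht' subset_rfl,
    fun _ _ hC' => crossingEdges_ncard_le.trans hC'.succ_le_ncard⟩

lemma two_pow_mem_edgeSpan_image_inter_crossingEdges {k u t : ℕ} (hdvd : 2 ^ k ∣ u)
    (hle : u + 2 ^ k ≤ 2 ^ q) (he : dyadicEdge q k u ∈ C) (hut : u < t)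
    (htu : t ≤ u + 2 ^ k) :
    2 ^ k ∈ edgeSpan '' (C ∩ crossingEdges q t) :=
  ⟨_, ⟨he, dyadicEdge_mem_crossingEdges hdvd hle hut htu⟩, edgeSpan_dyadicEdge hle⟩

lemma reachable_or_exists_threshold {k u : ℕ} (hdvd : 2 ^ k ∣ u) (hle : u + 2 ^ k ≤ 2 ^ q) :
    ((TFractal q).deleteEdges C).Reachable (u : Fin (2 ^ q + 1)) ((u + 2 ^ k : ℕ) : Fin _) ∨
      ∃ t, u < t ∧ t ≤ u + 2 ^ k ∧
        ∀ m ≤ k, 2 ^ m ∈ edgeSpan '' (C ∩ crossingEdges q t) := by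
  induction k generalizing u with
  | zero =>
    by_cases he : dyadicEdge q 0 u ∈ C
    · refine Or.inr ⟨u + 1, by omega, le_rfl, fun m hm => ?_⟩
      obtain rfl := Nat.le_zero.1 hm
      exact two_pow_mem_edgeSpan_image_inter_crossingEdges hdvd hle he (by omega) le_rfl
    · exact Or.inl (reachable_of_dyadicEdge_notMem hdvd hle he)
  | succ k ih =>
    by_cases he : dyadicEdge q (k + 1) u ∉ C
    · exact Or.inl (reachable_of_dyadicEdge_notMem hdvd hle he)
    have top := fun t => two_pow_mem_edgeSpan_image_inter_crossingEdges (t := t) hdvd hle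
      (not_not.1 he)
    have hpow : 2 ^ (k + 1) = 2 ^ k + 2 ^ k := by rw [pow_succ]; omega
    have extend : ∀ t, u < t → t ≤ u + 2 ^ (k + 1) →
        (∀ m ≤ k, 2 ^ m ∈ edgeSpan '' (C ∩ crossingEdges q t)) →
        ∃ t, u < t ∧ t ≤ u + 2 ^ (k + 1) ∧
          ∀ m ≤ k + 1, 2 ^ m ∈ edgeSpan '' (C ∩ crossingEdges q t) :=
      fun t hut htu ht => ⟨t, hut, htu, fun m hm => (Nat.of_le_succ hm).elim (ht m)
        fun hm => hm ▸ top t hut htu⟩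
    have hdvd' : 2 ^ k ∣ u := (pow_dvd_pow 2 k.le_succ).trans hdvd
    rcases ih hdvd' (by omega) with h₁ | ⟨t, hut, htu, ht⟩
    · rcases ih (hdvd'.add dvd_rfl) (by omega) with h₂ | ⟨t, hut, htu, ht⟩
      · left
        rw [hpow, ← add_assoc]
        exact h₁.trans h₂
      · exact Or.inr (extend t (by omega) (by omega) ht)
    · exact Or.inr (extend t hut (by omega) ht)

lemma MinSTCut.exists_eq_crossingEdges (hC : MinSTCut q C) :
    ∃ t ∈ Icc 1 (2 ^ q), crossingEdges q t = C := by
  obtain ⟨-, hcut, hmin⟩ := hC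
  obtain hreach | ⟨t, hut, htu, ht⟩ :=
    reachable_or_exists_threshold (C := C) (k := q) (u := 0) (dvd_zero _) (by omega)
  · rw [zero_add, ← sigV_eq_natCast, ← tauV_eq_natCast] at hreach
    exact absurd hreach hcut
  refine ⟨t, ⟨hut, by omega⟩, ?_⟩
  have hsub : crossingEdges q t ⊆ C := by
    intro f hf
    obtain ⟨m, hm, hspan⟩ := TFractal.edgeSpan_mem_of_mem_edgeSet hf.1
    obtain ⟨e, ⟨heC, he⟩, hspan'⟩ := ht m hm
    rwa [← edgeSpan_injOn_crossingEdges he hf (hspan'.trans hspan)]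
  exact eq_of_subset_of_ncard_le hsub
    (hmin _ (sep_subset _ _) (isSTCut_of_crossingEdges_subset hut (by omega) subset_rfl))

end cuts

lemma crossingEdges_injOn (q : ℕ) : InjOn (crossingEdges q) (Icc 1 (2 ^ q)) := by
  have key : ∀ {t t'}, t ∈ Icc 1 (2 ^ q) → crossingEdges q t ⊆ crossingEdges q t' →
      t - 1 < t' ∧ t' ≤ t := by
    rintro t t' ⟨ht, ht'⟩ hsub
    have hle : t - 1 + 2 ^ 0 ≤ 2 ^ q := by omega
    have hval₁ := val_natCast_of_le (le_of_add_le_left hle)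
    have hval₂ := val_natCast_of_le hle
    have := lt_and_le_of_mk_mem_crossingEdges
      (hsub (dyadicEdge_mem_crossingEdges (one_dvd _) hle (by omega) (by omega))) (by omega)
    omega
  intro t ht t' ht' h
  have h1 := key ht h.le
  have h2 := key ht' h.ge
  omega

/-- the `q`-T-fractal has exactly `2^q` pairwise distinct minimum
`σ`-`τ` edge cuts. -/
theorem tfractal_number_of_min_cuts (q : ℕ) :
    {C : Set (Sym2 (Fin (2 ^ q + 1))) | MinSTCut q C}.ncard = 2 ^ q := by
  have hset : {C : Set (Sym2 (Fin (2 ^ q + 1))) | MinSTCut q C} =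
      crossingEdges q '' Icc 1 (2 ^ q) := by
    ext C
    refine ⟨fun hC => hC.exists_eq_crossingEdges, ?_⟩
    rintro ⟨t, ⟨ht, ht'⟩, rfl⟩
    exact minSTCut_crossingEdges ht ht'
  rw [hset, (crossingEdges_injOn q).ncard_image, ncard_Icc_nat, Nat.add_sub_cancel]
end

section
/- The diameter of the q-T-fractal △_q is O(q); more precisely, any two vertices of △_q are at distance at most 2q + 2. -/
/-! From `σ = 0` a vertex `v` is reached by reading `v` in binary from the top: standing at a
multiple `a` of `2^(k+1)` with `a ≤ v ≤ a + 2^(k+1)`, either already `v ≤ a + 2^k`, or the edge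
`{a, a + 2^k}` is taken. After the `q` halvings `v` is at most one edge away, so
`dist σ v ≤ q + 1`, and the triangle inequality through `σ` gives `2q + 2`. -/

namespace TFractal

theorem adj_of_dvd {q k : ℕ} (hk : k ≤ q) {a b : Fin (2 ^ q + 1)}
    (ha : 2 ^ k ∣ a.val) (hb : b.val = a.val + 2 ^ k) : (TFractal q).Adj a b :=
  Or.inl ⟨q - k, Nat.sub_le q k, by rwa [Nat.sub_sub_self hk], by rwa [Nat.sub_sub_self hk]⟩

theorem exists_walk_length_le {q k : ℕ} (hk : k ≤ q) {a v : Fin (2 ^ q + 1)}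
    (ha : 2 ^ k ∣ a.val) (hav : a.val ≤ v.val) (hva : v.val ≤ a.val + 2 ^ k) :
    ∃ p : (TFractal q).Walk a v, p.length ≤ k + 1 := by
  induction k generalizing a with
  | zero =>
    rcases (show v.val = a.val ∨ v.val = a.val + 2 ^ 0 by omega) with h | h
    · obtain rfl : v = a := Fin.ext h
      exact ⟨.nil, by simp⟩
    · exact ⟨.cons (adj_of_dvd hk ha h) .nil, by simp⟩
  | succ k ih =>
    have ha' : 2 ^ k ∣ a.val := (pow_dvd_pow 2 k.le_succ).trans ha
    rw [pow_succ, mul_two] at hva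
    by_cases hv : v.val ≤ a.val + 2 ^ k
    · obtain ⟨p, hp⟩ := ih (by omega) ha' hav hv
      exact ⟨p, by omega⟩
    · let b : Fin (2 ^ q + 1) := ⟨a.val + 2 ^ k, by omega⟩
      obtain ⟨p, hp⟩ := ih (a := b) (by omega) (dvd_add ha' dvd_rfl)
        (show a.val + 2 ^ k ≤ v.val by omega) (show v.val ≤ a.val + 2 ^ k + 2 ^ k by omega)
      exact ⟨.cons (adj_of_dvd (by omega) ha' rfl) p, by rw [SimpleGraph.Walk.length_cons]; omega⟩

theorem exists_walk_sigV (q : ℕ) (v : Fin (2 ^ q + 1)) :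
    ∃ p : (TFractal q).Walk (sigV q) v, p.length ≤ q + 1 :=
  exists_walk_length_le le_rfl (dvd_zero _) (Nat.zero_le _) (by simpa [sigV] using v.is_le)

theorem connected (q : ℕ) : (TFractal q).Connected :=
  have reach (v : Fin (2 ^ q + 1)) : (TFractal q).Reachable (sigV q) v :=
    (exists_walk_sigV q v).elim fun p _ => ⟨p⟩
  (SimpleGraph.connected_iff _).2 ⟨fun u v => (reach u).symm.trans (reach v), ⟨sigV q⟩⟩

theorem dist_sigV_le (q : ℕ) (v : Fin (2 ^ q + 1)) : (TFractal q).dist (sigV q) v ≤ q + 1 :=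
  (exists_walk_sigV q v).elim fun p hp => (SimpleGraph.dist_le p).trans hp

end TFractal

/-- the diameter of the `q`-T-fractal is `O(q)`; more precisely, `△_q`
is connected and any two of its vertices are at distance at most `2q + 2`. -/
theorem tfractal_diameter_bound (q : ℕ) :
    (TFractal q).Connected ∧
      ∀ u v : Fin (2 ^ q + 1), (TFractal q).dist u v ≤ 2 * q + 2 := by
  refine ⟨TFractal.connected q, fun u v => ?_⟩
  calc (TFractal q).dist u v
      ≤ (TFractal q).dist u (sigV q) + (TFractal q).dist (sigV q) v :=
        (TFractal.connected q).dist_triangle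
    _ = (TFractal q).dist (sigV q) u + (TFractal q).dist (sigV q) v := by
        rw [SimpleGraph.dist_comm]
    _ ≤ 2 * q + 2 := by linarith [TFractal.dist_sigV_le q u, TFractal.dist_sigV_le q v]
end
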